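/- arXiv:1808.02126 — 2 statements merged into one kernel-verified Lean document; each statement's English description precedes it below -/
import Mathlib

section
/- Under a polynomial dichotomy with projections P_m, constants D > 0 and λ ∈ (0,1), for each y = (y_n) ∈ Y_0 the sequence x_n = Σ_{k=1}^n (1/k) A(n,k) P_k y_k − Σ_{k=n+1}^∞ (1/k) A(n,k) Q_k y_k is well-defined, belongs to Y (i.e., sup_n ‖x_n‖_n < ∞), satisfies x_1 ∈ Im Q_1, and satisfies x_{n+1} − A_n x_n = (1/(n+1)) y_{n+1} for all n ∈ ℕ. -/
/-!
The stable part `∑_{k ≤ n} k⁻¹ 𝓐(n,k) P_k y_k` is bounded by the forward estimate: its `k`-th term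
is at most `D ‖y‖ n^{-λ} k^{λ-1}`, and `∑_{k ≤ n} k^{λ-1} ≤ n^λ / λ`. Symmetrically, the backward
estimate bounds the `k`-th unstable term by `D (1 + D) ‖y‖ n^λ k^{-λ-1}`, and
`∑_{k > n} k^{-λ-1} ≤ n^{-λ} / λ`, so the unstable series converges and both parts are bounded
uniformly in `n`. The power sums telescope through the mean value theorem for `t ↦ t ^ p`.

Applying `A_n` moves every term from index `n` to index `n + 1` (for the unstable terms because
`𝓐(n+1,k)` is injective on `Ker P_{n+1}`), and the only term that changes sides, `k = n + 1`,
contributes `(n+1)⁻¹ (P_{n+1} y_{n+1} + Q_{n+1} y_{n+1}) = (n+1)⁻¹ y_{n+1}`.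
-/

open scoped BigOperators

variable {X : Type*} [NormedAddCommGroup X] [NormedSpace ℝ X]

/-- The cocycle generated by a sequence of bounded operators:
`coc A n m = 𝓐(m,n) = A_{m-1} ⋯ A_n` for `m > n`, and `= Id` for `m ≤ n`. -/
def coc (A : ℕ → X →L[ℝ] X) (n : ℕ) : ℕ → X →L[ℝ] X
  | 0 => 1
  | m + 1 => if n ≤ m then (A m).comp (coc A n m) else 1

/-- The formal difference operator: `(T x)_1 = 0` and
`(T x)_{m+1} = (m+1)(x_{m+1} - A_m x_m)` for `m ≥ 1`. -/
noncomputable def TOp (A : ℕ → X →L[ℝ] X) (x : ℕ → X) : ℕ → X :=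
  fun m => if m ≤ 1 then 0 else (m : ℝ) • (x m - A (m - 1) (x (m - 1)))

/-- `N` is a family (indexed by `m ≥ 1`) of norms on `X`, each equivalent to `‖·‖`. -/
def NormFamily (N : ℕ → X → ℝ) : Prop :=
  ∀ m, 1 ≤ m →
    (∀ x y : X, N m (x + y) ≤ N m x + N m y) ∧
    (∀ (c : ℝ) (x : X), N m (c • x) = |c| * N m x) ∧
    (∃ c C : ℝ, 0 < c ∧ ∀ x : X, c * ‖x‖ ≤ N m x ∧ N m x ≤ C * ‖x‖)

/-- Membership in `Y`: `sup_{m ≥ 1} ‖x_m‖_m < ∞`. -/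
def MemY (N : ℕ → X → ℝ) (x : ℕ → X) : Prop :=
  ∃ S : ℝ, ∀ m, 1 ≤ m → N m (x m) ≤ S

/-- Membership in `Y₀ = Y_{{0}}`: bounded and `x_1 = 0`. -/
def MemY0 (N : ℕ → X → ℝ) (x : ℕ → X) : Prop := x 1 = 0 ∧ MemY N x

/-- Membership in `Y_Z`: bounded and `x_1 ∈ Z`. -/
def MemYZ (N : ℕ → X → ℝ) (Z : Set X) (x : ℕ → X) : Prop := x 1 ∈ Z ∧ MemY N x

/-- Membership in the domain `𝒟(T_Z)`: `x ∈ Y_Z` and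
`sup_{m ≥ 1} (m+1)‖x_{m+1} - A_m x_m‖_{m+1} < ∞`. -/
def MemD (A : ℕ → X →L[ℝ] X) (N : ℕ → X → ℝ) (Z : Set X) (x : ℕ → X) : Prop :=
  MemYZ N Z x ∧ MemY N (TOp A x)

/-- Polynomial dichotomy (with given projections and constants) with respect to the
sequence of norms `N`.  The bound along the unstable direction is stated in the
equivalent "forward" form: `‖u‖_m ≤ D (m/n)^λ ‖𝓐(n,m)u‖_n` for `u ∈ Ker P_m`, `m ≤ n`. -/
def PolyDichWith (A : ℕ → X →L[ℝ] X) (N : ℕ → X → ℝ) (P : ℕ → X →L[ℝ] X)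
    (D lam : ℝ) : Prop :=
  (∀ m, 1 ≤ m → (P m).comp (P m) = P m) ∧
  (∀ m, 1 ≤ m → (A m).comp (P m) = (P (m + 1)).comp (A m)) ∧
  (∀ m, 1 ≤ m → ∀ y, P (m + 1) y = 0 → ∃! x, P m x = 0 ∧ A m x = y) ∧
  (∀ m n, 1 ≤ n → n ≤ m → ∀ x : X,
      N m (coc A n m (P n x)) ≤ D * (((m : ℝ) / (n : ℝ)) ^ (-lam)) * N n x) ∧
  (∀ m n, 1 ≤ m → m ≤ n → ∀ u : X, P m u = 0 →
      N m u ≤ D * (((m : ℝ) / (n : ℝ)) ^ lam) * N n (coc A m n u))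

/-- `(A_m)` admits a polynomial dichotomy with respect to the sequence of norms `N`. -/
def PolyDich (A : ℕ → X →L[ℝ] X) (N : ℕ → X → ℝ) : Prop :=
  ∃ (P : ℕ → X →L[ℝ] X) (D lam : ℝ), 0 < D ∧ 0 < lam ∧ PolyDichWith A N P D lam

open Finset

theorem rpow_sub_one_mul_sub_le_div {p a b : ℝ} (hp : p ≤ 1) (hp0 : p ≠ 0) (ha : 0 ≤ a)
    (hpa : 0 < a ∨ 0 < p) (hab : a < b) : b ^ (p - 1) * (b - a) ≤ (b ^ p - a ^ p) / p := by
  have hcont : ContinuousOn (fun t : ℝ => t ^ p) (Set.Icc a b) := fun t ht =>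
    (Real.continuousAt_rpow_const t p
      (hpa.imp (fun h => (h.trans_le ht.1).ne') le_of_lt)).continuousWithinAt
  have hderiv : ∀ t ∈ Set.Ioo a b, HasDerivAt (fun t : ℝ => t ^ p) (p * t ^ (p - 1)) t :=
    fun t ht => Real.hasDerivAt_rpow_const (Or.inl (ha.trans_lt ht.1).ne')
  obtain ⟨c, ⟨hac, hcb⟩, hc⟩ := exists_hasDerivAt_eq_slope _ _ hab hcont hderiv
  have hba : b - a ≠ 0 := sub_ne_zero.2 hab.ne'
  calc b ^ (p - 1) * (b - a) ≤ c ^ (p - 1) * (b - a) :=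
        mul_le_mul_of_nonneg_right
          (Real.rpow_le_rpow_of_nonpos (ha.trans_lt hac) hcb.le (by linarith)) (by linarith)
    _ = (b ^ p - a ^ p) / p := by
        rw [eq_div_iff hba] at hc
        field_simp
        linear_combination hc

theorem sum_Ioc_rpow_sub_one_le {p : ℝ} (hp : p ≤ 1) (hp0 : p ≠ 0) {a b : ℕ}
    (hpa : 0 < a ∨ 0 < p) (hab : a ≤ b) :
    ∑ k ∈ Ioc a b, (k : ℝ) ^ (p - 1) ≤ ((b : ℝ) ^ p - (a : ℝ) ^ p) / p := by
  induction b, hab using Nat.le_induction with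
  | base => simp
  | succ b hab ih =>
    have hstep := rpow_sub_one_mul_sub_le_div hp hp0 (Nat.cast_nonneg b)
      (hpa.imp_left fun h => by exact_mod_cast h.trans_le hab) (lt_add_one (b : ℝ))
    rw [sum_Ioc_succ_top hab]
    push_cast
    calc _ ≤ ((b : ℝ) ^ p - (a : ℝ) ^ p) / p + ((b + 1 : ℝ) ^ p - (b : ℝ) ^ p) / p := by
          simpa using add_le_add ih hstep
      _ = _ := by ring

theorem sum_Icc_rpow_sub_one_le {lam : ℝ} (h0 : 0 < lam) (h1 : lam ≤ 1) (n : ℕ) :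
    ∑ k ∈ Icc 1 n, (k : ℝ) ^ (lam - 1) ≤ (n : ℝ) ^ lam / lam := by
  rw [← Nat.zero_add 1, Icc_add_one_left_eq_Ioc]
  simpa [Real.zero_rpow h0.ne'] using
    sum_Ioc_rpow_sub_one_le h1 h0.ne' (Or.inr h0) (Nat.zero_le n)

theorem sum_Ioc_rpow_neg_sub_one_le {lam : ℝ} (h0 : 0 < lam) {n : ℕ} (hn : 1 ≤ n) (M : ℕ) :
    ∑ k ∈ Ioc n M, (k : ℝ) ^ (-lam - 1) ≤ (n : ℝ) ^ (-lam) / lam := by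
  rcases le_total M n with hM | hM
  · rw [Ioc_eq_empty_of_le hM, sum_empty]
    positivity
  · calc _ ≤ ((M : ℝ) ^ (-lam) - (n : ℝ) ^ (-lam)) / -lam :=
          sum_Ioc_rpow_sub_one_le (by linarith) (neg_ne_zero.2 h0.ne') (Or.inl hn) hM
      _ ≤ (n : ℝ) ^ (-lam) / lam := by
          rw [div_neg, ← neg_div, neg_sub]
          gcongr
          exact sub_le_self _ (by positivity)

theorem summable_ite_rpow_neg_sub_one {lam : ℝ} (h0 : 0 < lam) (n : ℕ) :
    Summable fun k : ℕ => if n + 1 ≤ k then (k : ℝ) ^ (-lam - 1) else 0 :=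
  (Real.summable_nat_rpow.2 (by linarith : -lam - 1 < -1)).of_nonneg_of_le
    (fun k => by split_ifs <;> positivity) (fun k => by split_ifs; exacts [le_rfl, by positivity])

theorem tsum_ite_rpow_neg_sub_one_le {lam : ℝ} (h0 : 0 < lam) {n : ℕ} (hn : 1 ≤ n) :
    ∑' k : ℕ, (if n + 1 ≤ k then (k : ℝ) ^ (-lam - 1) else 0) ≤ (n : ℝ) ^ (-lam) / lam := by
  refine Real.tsum_le_of_sum_range_le (fun k => by split_ifs <;> positivity) fun j => ?_
  rw [← sum_filter]
  refine (sum_le_sum_of_subset_of_nonneg ?_ fun k _ _ => by positivity).trans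
    (sum_Ioc_rpow_neg_sub_one_le h0 hn j)
  intro k hk
  simp only [mem_filter, mem_range] at hk
  simp only [mem_Ioc]
  omega

theorem inv_mul_div_rpow {n k : ℝ} (hn : 0 < n) (hk : 0 < k) (p : ℝ) :
    k⁻¹ * (n / k) ^ p = n ^ p * k ^ (-p - 1) := by
  rw [Real.div_rpow hn.le hk.le, Real.rpow_sub hk, Real.rpow_neg hk.le, Real.rpow_one]
  field_simp

section Cocycle

variable (A : ℕ → X →L[ℝ] X)

theorem coc_self_apply (n : ℕ) (u : X) : coc A n n u = u := by
  cases n <;> simp [coc]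

theorem coc_succ_apply {n m : ℕ} (h : n ≤ m) (u : X) :
    coc A n (m + 1) u = A m (coc A n m u) := by
  simp [coc, h]

theorem coc_apply_eq_coc_succ_apply {n k : ℕ} (h : n + 1 ≤ k) (u : X) :
    coc A n k u = coc A (n + 1) k (A n u) := by
  induction k, h using Nat.le_induction with
  | base => rw [coc_succ_apply A le_rfl, coc_self_apply, coc_self_apply]
  | succ k hk ih => rw [coc_succ_apply A (by omega), coc_succ_apply A hk, ih]

variable {A} {P : ℕ → X →L[ℝ] X}

theorem proj_succ_apply {n : ℕ} (hcomm : (A n).comp (P n) = (P (n + 1)).comp (A n)) (u : X) :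
    P (n + 1) (A n u) = A n (P n u) :=
  (DFunLike.congr_fun hcomm u).symm

theorem proj_coc_apply
    (hcomm : ∀ m, 1 ≤ m → (A m).comp (P m) = (P (m + 1)).comp (A m)) {n k : ℕ} (hn : 1 ≤ n)
    (hk : n ≤ k) (v : X) :
    P k (coc A n k v) = coc A n k (P n v) := by
  induction k, hk using Nat.le_induction with
  | base => rw [coc_self_apply, coc_self_apply]
  | succ k hk ih =>
    rw [coc_succ_apply A hk, coc_succ_apply A hk, proj_succ_apply (hcomm k (hn.trans hk)), ih]

theorem coc_injOn_ker
    (hcomm : ∀ m, 1 ≤ m → (A m).comp (P m) = (P (m + 1)).comp (A m))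
    (hinv : ∀ m, 1 ≤ m → ∀ y, P (m + 1) y = 0 → ∃! x, P m x = 0 ∧ A m x = y)
    {n k : ℕ} (hn : 1 ≤ n) (hk : n ≤ k) : Set.InjOn (coc A n k) {w | P n w = 0} := by
  induction k, hk using Nat.le_induction with
  | base => simp [Set.InjOn, coc_self_apply]
  | succ k hk ih =>
    intro w hw w' hw' h
    simp only [Set.mem_ofPred_eq, coc_succ_apply A hk] at hw hw' h
    have hker : ∀ u, P n u = 0 → P k (coc A n k u) = 0 := fun u hu => by
      rw [proj_coc_apply hcomm hn hk, hu, map_zero]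
    have hAker : P (k + 1) (A k (coc A n k w)) = 0 := by
      rw [proj_succ_apply (hcomm k (hn.trans hk)), hker w hw, map_zero]
    obtain ⟨_, _, huniq⟩ := hinv k (hn.trans hk) _ hAker
    exact ih hw hw' ((huniq _ ⟨hker w hw, rfl⟩).trans (huniq _ ⟨hker w' hw', h.symm⟩).symm)

end Cocycle

namespace NormFamily

variable {N : ℕ → X → ℝ} {m : ℕ}

theorem smul (hN : NormFamily N) (hm : 1 ≤ m) (c : ℝ) (x : X) : N m (c • x) = |c| * N m x :=
  (hN m hm).2.1 c x

theorem nonneg (hN : NormFamily N) (hm : 1 ≤ m) (x : X) : 0 ≤ N m x := by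
  obtain ⟨c, _, hc, hb⟩ := (hN m hm).2.2
  exact (mul_nonneg hc.le (norm_nonneg x)).trans (hb x).1

theorem map_zero (hN : NormFamily N) (hm : 1 ≤ m) : N m 0 = 0 := by
  simpa using hN.smul hm 0 0

theorem sub_le (hN : NormFamily N) (hm : 1 ≤ m) (x y : X) : N m (x - y) ≤ N m x + N m y := by
  have hneg : N m (-y) = N m y := by simpa using hN.smul hm (-1) y
  simpa [sub_eq_add_neg, hneg] using (hN m hm).1 x (-y)

theorem sum_le (hN : NormFamily N) (hm : 1 ≤ m) {ι : Type*} (s : Finset ι) (f : ι → X) :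
    N m (∑ i ∈ s, f i) ≤ ∑ i ∈ s, N m (f i) :=
  le_sum_of_subadditive _ (hN.map_zero hm).le (hN m hm).1 s f

theorem continuous (hN : NormFamily N) (hm : 1 ≤ m) : Continuous (N m) := by
  obtain ⟨c, C, hc, hb⟩ := (hN m hm).2.2
  refine (LipschitzWith.of_le_add_mul' C fun x y => ?_).continuous
  calc N m x = N m ((x - y) + y) := by rw [sub_add_cancel]
    _ ≤ N m (x - y) + N m y := (hN m hm).1 _ _
    _ ≤ N m y + C * dist x y := by rw [dist_eq_norm]; linarith [(hb (x - y)).2]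

theorem summable_of_le [CompleteSpace X] (hN : NormFamily N) (hm : 1 ≤ m) {f : ℕ → X}
    {g : ℕ → ℝ} (hg : Summable g) (hfg : ∀ k, N m (f k) ≤ g k) : Summable f := by
  obtain ⟨c, _, hc, hb⟩ := (hN m hm).2.2
  refine Summable.of_norm_bounded (hg.mul_left c⁻¹) fun k => ?_
  rw [← div_eq_inv_mul, le_div_iff₀' hc]
  exact (hb _).1.trans (hfg k)

theorem tsum_le_of_le (hN : NormFamily N) (hm : 1 ≤ m) {f : ℕ → X} (hf : Summable f)
    {g : ℕ → ℝ} (hg : Summable g) (hfg : ∀ k, N m (f k) ≤ g k) :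
    N m (∑' k, f k) ≤ ∑' k, g k := by
  have hg0 : ∀ k, 0 ≤ g k := fun k => (hN.nonneg hm _).trans (hfg k)
  refine le_of_tendsto (((hN.continuous hm).tendsto _).comp hf.hasSum.tendsto_sum_nat)
    (Filter.Eventually.of_forall fun j => ?_)
  exact (hN.sum_le hm _ _).trans
    ((Finset.sum_le_sum fun k _ => hfg k).trans (hg.sum_le_tsum _ fun k _ => hg0 k))

end NormFamily

/-- `B n k` is the paper's `𝓐(n,k) = (𝓐(k,n)|_{Ker P_n})⁻¹ : Ker P_k → Ker P_n` for `n ≤ k`. -/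
def IsBackwardInverse (A P : ℕ → X →L[ℝ] X) (B : ℕ → ℕ → X → X) : Prop :=
  ∀ n k, 1 ≤ n → n ≤ k → ∀ v : X, P k v = 0 → P n (B n k v) = 0 ∧ coc A n k (B n k v) = v

namespace IsBackwardInverse

variable {A P : ℕ → X →L[ℝ] X} {B : ℕ → ℕ → X → X}

theorem self_apply (hB : IsBackwardInverse A P B) {k : ℕ} (hk : 1 ≤ k) {v : X}
    (hv : P k v = 0) : B k k v = v := by
  simpa [coc_self_apply] using (hB k k hk le_rfl v hv).2

theorem map_apply (hB : IsBackwardInverse A P B)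
    (hcomm : ∀ m, 1 ≤ m → (A m).comp (P m) = (P (m + 1)).comp (A m))
    (hinv : ∀ m, 1 ≤ m → ∀ y, P (m + 1) y = 0 → ∃! x, P m x = 0 ∧ A m x = y)
    {n k : ℕ} (hn : 1 ≤ n) (hk : n + 1 ≤ k) {v : X} (hv : P k v = 0) :
    A n (B n k v) = B (n + 1) k v := by
  obtain ⟨hker, hcoc⟩ := hB n k hn (by omega) v hv
  obtain ⟨hker', hcoc'⟩ := hB (n + 1) k (by omega) hk v hv
  refine coc_injOn_ker hcomm hinv (by omega) hk ?_ hker' ?_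
  · rw [Set.mem_ofPred_eq, proj_succ_apply (hcomm n hn), hker, map_zero]
  · rw [← coc_apply_eq_coc_succ_apply A hk, hcoc, hcoc']

end IsBackwardInverse

namespace PolyDichWith

variable {A : ℕ → X →L[ℝ] X} {N : ℕ → X → ℝ} {P : ℕ → X →L[ℝ] X} {D lam : ℝ}

theorem proj_sub_proj_eq_zero (h : PolyDichWith A N P D lam) {k : ℕ} (hk : 1 ≤ k) (x : X) :
    P k (x - P k x) = 0 := by
  rw [map_sub, ← ContinuousLinearMap.comp_apply, h.1 k hk, sub_self]

theorem norm_proj_le (h : PolyDichWith A N P D lam) {k : ℕ} (hk : 1 ≤ k) (x : X) :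
    N k (P k x) ≤ D * N k x := by
  obtain ⟨-, -, -, hstable, -⟩ := h
  have hk0 : (k : ℝ) ≠ 0 := by positivity
  simpa [coc_self_apply, div_self hk0] using hstable k k hk le_rfl x

theorem norm_sub_proj_le (hN : NormFamily N) (h : PolyDichWith A N P D lam) {k : ℕ}
    (hk : 1 ≤ k) (x : X) : N k (x - P k x) ≤ (1 + D) * N k x := by
  linarith [hN.sub_le hk x (P k x), h.norm_proj_le hk x]

theorem norm_smul_coc_proj_le (hN : NormFamily N) (h : PolyDichWith A N P D lam) {k n : ℕ}
    (hk : 1 ≤ k) (hkn : k ≤ n) (x : X) :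
    N n ((k : ℝ)⁻¹ • coc A k n (P k x)) ≤ D * N k x * ((n : ℝ) ^ (-lam) * (k : ℝ) ^ (lam - 1)) := by
  obtain ⟨-, -, -, hstable, -⟩ := h
  have hk0 : (0 : ℝ) < k := by exact_mod_cast hk
  have hn0 : (0 : ℝ) < n := by exact_mod_cast hk.trans hkn
  rw [hN.smul (hk.trans hkn), abs_of_pos (inv_pos.2 hk0)]
  calc (k : ℝ)⁻¹ * N n (coc A k n (P k x))
      ≤ (k : ℝ)⁻¹ * (D * ((n : ℝ) / k) ^ (-lam) * N k x) := by
        gcongr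
        exact hstable n k hk hkn x
    _ = D * N k x * ((k : ℝ)⁻¹ * ((n : ℝ) / k) ^ (-lam)) := by ring
    _ = _ := by rw [inv_mul_div_rpow hn0 hk0, neg_neg]

theorem norm_smul_backward_le (hN : NormFamily N) (h : PolyDichWith A N P D lam)
    {B : ℕ → ℕ → X → X} (hB : IsBackwardInverse A P B) {n k : ℕ} (hn : 1 ≤ n) (hnk : n ≤ k)
    {v : X} (hv : P k v = 0) :
    N n ((k : ℝ)⁻¹ • B n k v) ≤ D * N k v * ((n : ℝ) ^ lam * (k : ℝ) ^ (-lam - 1)) := by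
  obtain ⟨-, -, -, -, hunstable⟩ := h
  have hk0 : (0 : ℝ) < k := by exact_mod_cast hn.trans hnk
  have hn0 : (0 : ℝ) < n := by exact_mod_cast hn
  obtain ⟨hker, hcoc⟩ := hB n k hn hnk v hv
  rw [hN.smul hn, abs_of_pos (inv_pos.2 hk0)]
  calc (k : ℝ)⁻¹ * N n (B n k v)
      ≤ (k : ℝ)⁻¹ * (D * ((n : ℝ) / k) ^ lam * N k v) := by
        gcongr
        simpa [hcoc] using hunstable n k hn hnk _ hker
    _ = D * N k v * ((k : ℝ)⁻¹ * ((n : ℝ) / k) ^ lam) := by ring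
    _ = _ := by rw [inv_mul_div_rpow hn0 hk0]

end PolyDichWith

noncomputable def stablePart (A P : ℕ → X →L[ℝ] X) (y : ℕ → X) (n : ℕ) : X :=
  ∑ k ∈ Icc 1 n, ((k : ℝ))⁻¹ • coc A k n (P k (y k))

noncomputable def unstableTerm (P : ℕ → X →L[ℝ] X) (B : ℕ → ℕ → X → X) (y : ℕ → X)
    (n k : ℕ) : X :=
  if n + 1 ≤ k then ((k : ℝ))⁻¹ • B n k (y k - P k (y k)) else 0

section Solution

variable {A : ℕ → X →L[ℝ] X} {N : ℕ → X → ℝ} {P : ℕ → X →L[ℝ] X} {D lam : ℝ}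
  {B : ℕ → ℕ → X → X} {y : ℕ → X} {S : ℝ}

theorem stablePart_one (hy : y 1 = 0) : stablePart A P y 1 = 0 := by
  simp [stablePart, hy]

theorem stablePart_succ (n : ℕ) :
    stablePart A P y (n + 1) =
      A n (stablePart A P y n) + ((n : ℝ) + 1)⁻¹ • P (n + 1) (y (n + 1)) := by
  rw [stablePart, sum_Icc_succ_top (by omega), coc_self_apply, stablePart, map_sum]
  push_cast
  congr 1
  refine sum_congr rfl fun k hk => ?_
  rw [map_smul, coc_succ_apply A (mem_Icc.1 hk).2]

theorem norm_stablePart_le (hN : NormFamily N) (h : PolyDichWith A N P D lam) (hD : 0 ≤ D)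
    (hlam0 : 0 < lam) (hlam1 : lam ≤ 1) (hS : ∀ k, 1 ≤ k → N k (y k) ≤ S) {n : ℕ}
    (hn : 1 ≤ n) : N n (stablePart A P y n) ≤ D * S / lam := by
  have hS0 : 0 ≤ S := (hN.nonneg le_rfl _).trans (hS 1 le_rfl)
  calc N n (stablePart A P y n)
      ≤ ∑ k ∈ Icc 1 n, D * S * ((n : ℝ) ^ (-lam) * (k : ℝ) ^ (lam - 1)) := by
        refine (hN.sum_le hn _ _).trans (sum_le_sum fun k hk => ?_)
        obtain ⟨hk1, hkn⟩ := mem_Icc.1 hk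
        refine (h.norm_smul_coc_proj_le hN hk1 hkn _).trans ?_
        gcongr
        exact hS k hk1
    _ = D * S * (n : ℝ) ^ (-lam) * ∑ k ∈ Icc 1 n, (k : ℝ) ^ (lam - 1) := by
        rw [mul_sum]
        exact sum_congr rfl fun k _ => by ring
    _ ≤ D * S * (n : ℝ) ^ (-lam) * ((n : ℝ) ^ lam / lam) := by
        gcongr
        exact sum_Icc_rpow_sub_one_le hlam0 hlam1 n
    _ = D * S / lam := by
        have hn0 : (0 : ℝ) < n := by exact_mod_cast hn
        rw [Real.rpow_neg hn0.le]
        field_simp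

theorem norm_unstableTerm_le (hN : NormFamily N) (h : PolyDichWith A N P D lam) (hD : 0 ≤ D)
    (hB : IsBackwardInverse A P B) (hS : ∀ k, 1 ≤ k → N k (y k) ≤ S) {n : ℕ} (hn : 1 ≤ n)
    (k : ℕ) :
    N n (unstableTerm P B y n k) ≤
      D * (1 + D) * S * (n : ℝ) ^ lam * (if n + 1 ≤ k then (k : ℝ) ^ (-lam - 1) else 0) := by
  unfold unstableTerm
  split_ifs with hk
  · have hk1 : 1 ≤ k := by omega
    calc _ ≤ D * N k (y k - P k (y k)) * ((n : ℝ) ^ lam * (k : ℝ) ^ (-lam - 1)) :=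
          h.norm_smul_backward_le hN hB hn (by omega) (h.proj_sub_proj_eq_zero hk1 _)
      _ ≤ D * ((1 + D) * S) * ((n : ℝ) ^ lam * (k : ℝ) ^ (-lam - 1)) := by
          gcongr
          exact (h.norm_sub_proj_le hN hk1 _).trans (by gcongr; exact hS k hk1)
      _ = _ := by ring
  · simp [hN.map_zero hn]

theorem summable_unstableTerm [CompleteSpace X] (hN : NormFamily N)
    (h : PolyDichWith A N P D lam) (hD : 0 ≤ D) (hlam0 : 0 < lam)
    (hB : IsBackwardInverse A P B) (hS : ∀ k, 1 ≤ k → N k (y k) ≤ S) {n : ℕ} (hn : 1 ≤ n) :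
    Summable (unstableTerm P B y n) :=
  hN.summable_of_le hn ((summable_ite_rpow_neg_sub_one hlam0 n).mul_left _)
    (norm_unstableTerm_le hN h hD hB hS hn)

theorem norm_tsum_unstableTerm_le [CompleteSpace X] (hN : NormFamily N)
    (h : PolyDichWith A N P D lam) (hD : 0 ≤ D) (hlam0 : 0 < lam)
    (hB : IsBackwardInverse A P B) (hS : ∀ k, 1 ≤ k → N k (y k) ≤ S) {n : ℕ} (hn : 1 ≤ n) :
    N n (∑' k, unstableTerm P B y n k) ≤ D * (1 + D) * S / lam := by
  have hS0 : 0 ≤ S := (hN.nonneg le_rfl _).trans (hS 1 le_rfl)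
  have hn0 : (0 : ℝ) < n := by exact_mod_cast hn
  calc N n (∑' k, unstableTerm P B y n k)
      ≤ ∑' k : ℕ, D * (1 + D) * S * (n : ℝ) ^ lam *
          (if n + 1 ≤ k then (k : ℝ) ^ (-lam - 1) else 0) :=
        hN.tsum_le_of_le hn (summable_unstableTerm hN h hD hlam0 hB hS hn)
          ((summable_ite_rpow_neg_sub_one hlam0 n).mul_left _)
          (norm_unstableTerm_le hN h hD hB hS hn)
    _ ≤ D * (1 + D) * S * (n : ℝ) ^ lam * ((n : ℝ) ^ (-lam) / lam) := by
        rw [tsum_mul_left]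
        gcongr
        exact tsum_ite_rpow_neg_sub_one_le hlam0 hn
    _ = D * (1 + D) * S / lam := by
        rw [Real.rpow_neg hn0.le]
        field_simp

theorem proj_tsum_unstableTerm (h : PolyDichWith A N P D lam) (hB : IsBackwardInverse A P B)
    {n : ℕ} (hn : 1 ≤ n) (hs : Summable (unstableTerm P B y n)) :
    P n (∑' k, unstableTerm P B y n k) = 0 := by
  rw [(P n).map_tsum hs]
  refine (tsum_congr fun k => ?_).trans tsum_zero
  unfold unstableTerm
  split_ifs with hk
  · rw [map_smul, (hB n k hn (by omega) _ (h.proj_sub_proj_eq_zero (by omega) _)).1, smul_zero]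
  · exact map_zero _

theorem map_tsum_unstableTerm (h : PolyDichWith A N P D lam) (hB : IsBackwardInverse A P B)
    {n : ℕ} (hn : 1 ≤ n) (hs : Summable (unstableTerm P B y n)) :
    A n (∑' k, unstableTerm P B y n k) =
      ∑' k, unstableTerm P B y (n + 1) k +
        ((n : ℝ) + 1)⁻¹ • (y (n + 1) - P (n + 1) (y (n + 1))) := by
  have hmap : ∀ k, A n (unstableTerm P B y n k) =
      if n + 1 ≤ k then ((k : ℝ))⁻¹ • B (n + 1) k (y k - P k (y k)) else 0 := fun k => by
    unfold unstableTerm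
    split_ifs with hk
    · rw [map_smul, hB.map_apply h.2.1 h.2.2.1 hn hk (h.proj_sub_proj_eq_zero (by omega) _)]
    · exact map_zero _
  rw [(A n).map_tsum hs, tsum_congr hmap,
    (((A n).summable hs).congr hmap).tsum_eq_add_tsum_ite (n + 1), add_comm,
    if_pos le_rfl, hB.self_apply (by omega) (h.proj_sub_proj_eq_zero (by omega) _)]
  push_cast
  congr 1
  refine tsum_congr fun k => ?_
  unfold unstableTerm
  split_ifs <;> first | rfl | omega

end Solution

/-- under a polynomial dichotomy with constants `D > 0`, `λ ∈ (0,1)`, for any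
`y ∈ Y₀` the sequence
`x_n = ∑_{k=1}^n (1/k) 𝓐(n,k) P_k y_k − ∑_{k=n+1}^∞ (1/k) 𝓐(n,k) Q_k y_k`
is well defined (the tail series is summable), bounded in the norms `‖·‖_n`,
has `x_1 ∈ Im Q₁`, and satisfies `x_{n+1} − A_n x_n = (1/(n+1)) y_{n+1}` for all `n ≥ 1`.
Here `B n k` denotes the inverse `𝓐(n,k) = (𝓐(k,n)|_{Ker P_n})^{-1} : Ker P_k → Ker P_n`. -/
theorem stmt5 [CompleteSpace X] (A : ℕ → X →L[ℝ] X) (N : ℕ → X → ℝ)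
    (hN : NormFamily N) (P : ℕ → X →L[ℝ] X) (D lam : ℝ)
    (hD : 0 < D) (hlam0 : 0 < lam) (hlam1 : lam < 1)
    (hdich : PolyDichWith A N P D lam)
    (B : ℕ → ℕ → X → X)
    (hB : ∀ n k, 1 ≤ n → n ≤ k → ∀ v : X, P k v = 0 →
      P n (B n k v) = 0 ∧ coc A n k (B n k v) = v)
    (y : ℕ → X) (hy : MemY0 N y) :
    let x : ℕ → X := fun n =>
      (∑ k ∈ Finset.Icc 1 n, ((k : ℝ))⁻¹ • coc A k n (P k (y k))) -
        ∑' k : ℕ, if n + 1 ≤ k then ((k : ℝ))⁻¹ • B n k (y k - P k (y k)) else 0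
    (∀ n, 1 ≤ n → Summable fun k : ℕ =>
        if n + 1 ≤ k then ((k : ℝ))⁻¹ • B n k (y k - P k (y k)) else (0 : X)) ∧
    MemY N x ∧
    x 1 ∈ Set.range (fun v : X => v - P 1 v) ∧
    (∀ n, 1 ≤ n → x (n + 1) - A n (x n) = (((n : ℝ) + 1))⁻¹ • y (n + 1)) := by
  obtain ⟨hy1, S, hS⟩ := hy
  have hs : ∀ n, 1 ≤ n → Summable (unstableTerm P B y n) := fun n hn =>
    summable_unstableTerm hN hdich hD.le hlam0 hB hS hn
  intro x
  have hx : ∀ n, x n = stablePart A P y n - ∑' k, unstableTerm P B y n k := fun n => rfl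
  refine ⟨hs, ⟨D * S / lam + D * (1 + D) * S / lam, fun n hn => ?_⟩, ⟨x 1, ?_⟩, fun n hn => ?_⟩
  · rw [hx]
    exact (hN.sub_le hn _ _).trans (add_le_add
      (norm_stablePart_le hN hdich hD.le hlam0 hlam1.le hS hn)
      (norm_tsum_unstableTerm_le hN hdich hD.le hlam0 hB hS hn))
  · have hPx : P 1 (x 1) = 0 := by
      rw [hx, map_sub, stablePart_one hy1, map_zero, proj_tsum_unstableTerm hdich hB le_rfl
        (hs 1 le_rfl), sub_zero]
    simp only [hPx, sub_zero]
  · rw [hx, hx, map_sub, stablePart_succ, map_tsum_unstableTerm hdich hB hn (hs n hn), smul_sub]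
    abel
end

section
/- In the setting where T_Z is invertible and the polynomial growth bound ‖A(m,n)x‖_m ≤ M(m/n)^a ‖x‖_n (m ≥ n) holds, for each n ∈ ℕ the restriction A_n|_{Z(n)} : Z(n) → Z(n+1) is a bijective linear map, where Z(n) = A(n,1)Z. -/
open scoped BigOperators

variable {X : Type*} [NormedAddCommGroup X] [NormedSpace ℝ X]

/-- The stable space `X(n) = {x : sup_{m ≥ n} ‖𝓐(m,n)x‖_m < ∞}`. -/
def Xs (A : ℕ → X →L[ℝ] X) (N : ℕ → X → ℝ) (n : ℕ) : Set X :=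
  {x : X | ∃ S : ℝ, ∀ m, n ≤ m → N m (coc A n m x) ≤ S}

/-- The unstable space `Z(n) = 𝓐(n,1) Z`. -/
def Zs (A : ℕ → X →L[ℝ] X) (Z : Set X) (n : ℕ) : Set X := coc A 1 n '' Z

/-- `T_Z : 𝒟(T_Z) → Y₀` is invertible, with `κ` a bound for the norm of its inverse
(with respect to the graph norm on the domain). -/
def TInv (A : ℕ → X →L[ℝ] X) (N : ℕ → X → ℝ) (Z : Set X) (κ : ℝ) : Prop :=
  (∀ y, MemY0 N y → ∃ x, MemD A N Z x ∧ ∀ m, 1 ≤ m → TOp A x m = y m) ∧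
  (∀ x x', MemD A N Z x → MemD A N Z x' →
      (∀ m, 1 ≤ m → TOp A x m = TOp A x' m) → ∀ m, 1 ≤ m → x m = x' m) ∧
  (∀ y x, MemY0 N y → MemD A N Z x → (∀ m, 1 ≤ m → TOp A x m = y m) →
      ∀ S : ℝ, (∀ m, 1 ≤ m → N m (y m) ≤ S) → ∀ m, 1 ≤ m → N m (x m) ≤ κ * S)

/-- The uniform polynomial growth bound `‖𝓐(m,n)x‖_m ≤ M (m/n)^a ‖x‖_n` for `m ≥ n`. -/
def Grow (A : ℕ → X →L[ℝ] X) (N : ℕ → X → ℝ) (M a : ℝ) : Prop :=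
  ∀ m n, 1 ≤ n → n ≤ m → ∀ x : X,
    N m (coc A n m x) ≤ M * (((m : ℝ) / (n : ℝ)) ^ a) * N n x


lemma coc_self (A : ℕ → X →L[ℝ] X) (n : ℕ) : coc A n n = 1 := by
  cases n with
  | zero => rfl
  | succ m => simp [coc]

lemma coc_succ_of_le (A : ℕ → X →L[ℝ] X) {n m : ℕ} (h : n ≤ m) :
    coc A n (m + 1) = (A m).comp (coc A n m) := by
  simp [coc, h]

lemma coc_split (A : ℕ → X →L[ℝ] X) (z : X) {k : ℕ} (hk : 1 ≤ k) :
    ∀ m, k ≤ m → coc A 1 m z = coc A k m (coc A 1 k z) := by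
  intro m hm
  induction m, hm using Nat.le_induction with
  | base => rw [coc_self]; rfl
  | succ m hm ih =>
      rw [coc_succ_of_le A (hk.trans hm), coc_succ_of_le A hm]
      simp only [ContinuousLinearMap.comp_apply, ih]

lemma normfam_zero {N : ℕ → X → ℝ} (hN : NormFamily N) {m : ℕ} (hm : 1 ≤ m) :
    N m 0 = 0 := by
  have h := (hN m hm).2.1 0 0
  simpa using h

/-- Key step: if `z ∈ Z` and `coc A 1 (n+1) z = 0` then `coc A 1 n z = 0`. -/
lemma key_inj [CompleteSpace X] (A : ℕ → X →L[ℝ] X) (N : ℕ → X → ℝ)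
    (hN : NormFamily N) (Z : Submodule ℝ X)
    (κ : ℝ) (hinv : TInv A N (Z : Set X) κ)
    (n : ℕ) (hn : 1 ≤ n) (z : X) (hz : z ∈ Z)
    (h0 : coc A 1 (n + 1) z = 0) : coc A 1 n z = 0 := by
  set x : ℕ → X := fun m => coc A 1 m z with hx
  -- x m = 0 for m ≥ n+1
  have hxz : ∀ m, n + 1 ≤ m → x m = 0 := by
    intro m hm
    have := coc_split A z (k := n + 1) (by omega) m hm
    simp only [hx]
    rw [this, h0, map_zero]
  -- TOp A x = 0 everywhere
  have hT : ∀ m, TOp A x m = 0 := by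
    intro m
    by_cases h1 : m ≤ 1
    · simp [TOp, h1]
    · have h2 : 2 ≤ m := by omega
      have hme : m - 1 + 1 = m := by omega
      have : x m = A (m - 1) (x (m - 1)) := by
        simp only [hx]
        conv_lhs => rw [← hme]
        rw [coc_succ_of_le A (by omega : 1 ≤ m - 1)]
        rfl
      simp [TOp, h1, this]
  -- x is bounded
  have hxb : MemY N x := by
    refine ⟨∑ k ∈ Finset.range (n + 1), |N k (x k)|, ?_⟩
    intro m hm
    by_cases hmn : m ≤ n
    · calc N m (x m) ≤ |N m (x m)| := le_abs_self _
        _ ≤ _ := Finset.single_le_sum (f := fun k => |N k (x k)|)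
            (fun k _ => abs_nonneg _) (by simp; omega)
    · rw [hxz m (by omega), normfam_zero hN hm]
      exact Finset.sum_nonneg fun k _ => abs_nonneg _
  -- x ∈ 𝒟(T_Z)
  have hx1 : x 1 ∈ Z := by
    have : x 1 = z := by simp [hx, coc_self]
    rw [this]; exact hz
  have hxD : MemD A N (Z : Set X) x := by
    refine ⟨⟨hx1, hxb⟩, ⟨0, fun m hm => ?_⟩⟩
    rw [hT m, normfam_zero hN hm]
  -- 0 ∈ 𝒟(T_Z)
  have h0D : MemD A N (Z : Set X) (fun _ => (0 : X)) := by
    refine ⟨⟨Z.zero_mem, ⟨0, fun m hm => by rw [normfam_zero hN hm]⟩⟩,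
      ⟨0, fun m hm => ?_⟩⟩
    have : TOp A (fun _ => (0 : X)) m = 0 := by
      by_cases h1 : m ≤ 1 <;> simp [TOp, h1]
    rw [this, normfam_zero hN hm]
  have := hinv.2.1 x (fun _ => (0 : X)) hxD h0D (fun m hm => by
    rw [hT m]
    by_cases h1 : m ≤ 1 <;> simp [TOp, h1]) n hn
  simpa [hx] using this

/-- in the setting where `T_Z` is invertible and the polynomial growth bound
holds, for each `n ≥ 1` the restriction `A_n|_{Z(n)} : Z(n) → Z(n+1)` is bijective. -/
theorem stmt8 [CompleteSpace X] (A : ℕ → X →L[ℝ] X) (N : ℕ → X → ℝ)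
    (hN : NormFamily N) (Z : Submodule ℝ X) (hZ : IsClosed (Z : Set X))
    (κ : ℝ) (hinv : TInv A N (Z : Set X) κ)
    (M a : ℝ) (hM : 0 < M) (ha : 0 < a) (hgrow : Grow A N M a) :
    ∀ n, 1 ≤ n →
      Set.BijOn (fun v => A n v) (Zs A (Z : Set X) n) (Zs A (Z : Set X) (n + 1)) := by
  intro n hn
  have hcoc : ∀ v, coc A 1 (n + 1) v = A n (coc A 1 n v) := by
    intro v; rw [coc_succ_of_le A hn]; rfl
  refine ⟨?_, ?_, ?_⟩
  · rintro v ⟨z, hz, rfl⟩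
    exact ⟨z, hz, hcoc z⟩
  · rintro v ⟨z1, hz1, rfl⟩ v' ⟨z2, hz2, rfl⟩ hvv
    simp only at hvv
    have hz : (z1 - z2 : X) ∈ Z := Z.sub_mem hz1 hz2
    have h0 : coc A 1 (n + 1) (z1 - z2) = 0 := by
      rw [hcoc, map_sub, map_sub, hvv, sub_self]
    have := key_inj A N hN Z κ hinv n hn (z1 - z2) hz h0
    rw [map_sub, sub_eq_zero] at this
    exact this
  · rintro v ⟨z, hz, rfl⟩
    exact ⟨coc A 1 n z, ⟨z, hz, rfl⟩, by simp [hcoc]⟩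
end
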